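/- Let u ∈ C²(ℝ, ℂ) be a solution of u'' + a₁|u|u + a₂|u|²u + a₃|u|³u = 0 with u(x) → 0 as x → ±∞ and u not identically zero. Then there exist θ₀ ∈ ℝ and a positive real-valued solution ρ of the same equation such that u = e^{iθ₀}ρ. -/

import Mathlib

/-!
The energy `‖u'‖² / 2 + potential ‖u‖` and the angular momentum `Im (conj u * u')` are conserved,
and both vanish at `+∞`: there `u → 0`, hence `u'' → 0`, which forces `u' → 0`. Zero energy on the
bounded orbit gives `‖u'‖ ≤ K ‖u‖`, so by Grönwall `u` cannot vanish anywhere without vanishing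
identically. Zero angular momentum then says that the phase `u / ‖u‖` is constant, and `ρ = ‖u‖`
solves the real equation.
-/

open Filter Topology Set
open scoped InnerProductSpace

section Calculus

variable {F : Type*} [NormedAddCommGroup F] [NormedSpace ℝ F] {f : ℝ → F}

theorem norm_sub_sub_smul_deriv_le (hf : Differentiable ℝ f) (hf' : Differentiable ℝ (deriv f))
    {a b M : ℝ} (hab : a ≤ b) (hM : ∀ t ∈ Icc a b, ‖deriv (deriv f) t‖ ≤ M) :
    ‖f b - f a - (b - a) • deriv f a‖ ≤ M * (b - a) * (b - a) := by
  have hM₀ : 0 ≤ M := (norm_nonneg _).trans (hM a ⟨le_rfl, hab⟩)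
  have hderiv : ∀ t ∈ Icc a b, ‖deriv f t - deriv f a‖ ≤ M * (t - a) :=
    norm_image_sub_le_of_norm_deriv_le_segment' (fun t _ ↦ (hf' t).hasDerivAt.hasDerivWithinAt)
      fun t ht ↦ hM t (Ico_subset_Icc_self ht)
  have hg : ∀ t ∈ Icc a b, HasDerivWithinAt (fun t ↦ f t - (t - a) • deriv f a)
      (deriv f t - deriv f a) (Icc a b) t := fun t _ ↦
    ((hf t).hasDerivAt.sub (((hasDerivAt_id t).sub_const a).smul_const _)).hasDerivWithinAt
      |>.congr_deriv (by simp)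
  have := norm_image_sub_le_of_norm_deriv_le_segment' (C := M * (b - a)) hg
    (fun t ht ↦ (hderiv t (Ico_subset_Icc_self ht)).trans (by gcongr; exact ht.2.le))
    b ⟨hab, le_rfl⟩
  simpa [sub_right_comm] using this

theorem tendsto_deriv_atTop_of_tendsto_deriv_deriv (hf : Differentiable ℝ f)
    (hf' : Differentiable ℝ (deriv f)) (h : Tendsto f atTop (𝓝 0))
    (h'' : Tendsto (deriv (deriv f)) atTop (𝓝 0)) :
    Tendsto (deriv f) atTop (𝓝 0) := by
  rw [NormedAddGroup.tendsto_nhds_zero] at h h'' ⊢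
  intro ε hε
  obtain ⟨X₀, hX₀⟩ :=
    eventually_atTop.mp ((h (ε / 4) (by positivity)).and (h'' (ε / 4) (by positivity)))
  filter_upwards [eventually_ge_atTop X₀] with X hX
  have htaylor := norm_sub_sub_smul_deriv_le hf hf' (le_add_of_nonneg_right zero_le_one)
    fun t ht ↦ (hX₀ t (hX.trans ht.1)).2.le
  rw [add_sub_cancel_left, one_smul, mul_one, mul_one] at htaylor
  calc ‖deriv f X‖ = ‖(f (X + 1) - f X) - (f (X + 1) - f X - deriv f X)‖ := by congr 1; abel
    _ ≤ ‖f (X + 1)‖ + ‖f X‖ + ‖f (X + 1) - f X - deriv f X‖ :=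
      norm_sub_le_of_le (norm_sub_le _ _) le_rfl
    _ < ε := by linarith [(hX₀ (X + 1) (by linarith)).1, (hX₀ X hX).1]

theorem eq_zero_of_norm_deriv_le_mul_norm_of_le (hf : Differentiable ℝ f) {K : ℝ}
    (hK : ∀ x, ‖deriv f x‖ ≤ K * ‖f x‖) {a x : ℝ} (ha : f a = 0) (hx : a ≤ x) : f x = 0 := by
  have := norm_le_gronwallBound_of_norm_deriv_right_le (δ := 0) (ε := 0) hf.continuous.continuousOn
    (fun t _ ↦ (hf t).hasDerivAt.hasDerivWithinAt) (by simp [ha]) (fun t _ ↦ by simpa using hK t)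
    x ⟨hx, le_rfl⟩
  rwa [gronwallBound_ε0_δ0, norm_le_zero_iff] at this

theorem eq_zero_of_norm_deriv_le_mul_norm (hf : Differentiable ℝ f) {K : ℝ}
    (hK : ∀ x, ‖deriv f x‖ ≤ K * ‖f x‖) {a : ℝ} (ha : f a = 0) (x : ℝ) : f x = 0 := by
  rcases le_total a x with hx | hx
  · exact eq_zero_of_norm_deriv_le_mul_norm_of_le hf hK ha hx
  · simpa using eq_zero_of_norm_deriv_le_mul_norm_of_le (f := fun t ↦ f (-t))
      (hf.comp differentiable_neg) (fun t ↦ by simpa [deriv_comp_neg] using hK (-t)) (a := -a)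
      (by simpa using ha) (neg_le_neg hx)

theorem eq_of_hasDerivAt_zero_of_tendsto {l : F} (hf : ∀ x, HasDerivAt f 0 x)
    (h : Tendsto f atTop (𝓝 l)) (x : ℝ) : f x = l := by
  have hconst : ∀ y, f y = f x := fun y ↦
    is_const_of_deriv_eq_zero (fun y ↦ (hf y).differentiableAt) (fun y ↦ (hf y).deriv) y x
  exact tendsto_nhds_unique (tendsto_const_nhds.congr fun y ↦ (hconst y).symm) h

end Calculus

namespace TriplePower

section InnerProductSpace

variable {E : Type*} [NormedAddCommGroup E] [InnerProductSpace ℝ E] (a₁ a₂ a₃ : ℝ)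

noncomputable def nonlinearity (r : ℝ) : ℝ := a₁ * r + a₂ * r ^ 2 + a₃ * r ^ 3

noncomputable def potential (r : ℝ) : ℝ := a₁ / 3 * r ^ 3 + a₂ / 4 * r ^ 4 + a₃ / 5 * r ^ 5

noncomputable def energy (u : ℝ → E) (x : ℝ) : ℝ :=
  ‖deriv u x‖ ^ 2 / 2 + potential a₁ a₂ a₃ ‖u x‖

theorem _root_.HasDerivAt.norm_pow_add_two {f : ℝ → E} {f' : E} {x : ℝ} (hf : HasDerivAt f f' x)
    (n : ℕ) :
    HasDerivAt (fun y ↦ ‖f y‖ ^ (n + 2)) ((n + 2) * ‖f x‖ ^ n * ⟪f x, f'⟫_ℝ) x := by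
  have hp : (1 : ℝ) < (n + 2 : ℕ) := by norm_cast; omega
  have h := (hasFDerivAt_norm_rpow (f x) hp).comp_hasDerivAt x hf
  have hexp : ((n + 2 : ℕ) : ℝ) - 2 = n := by push_cast; ring
  simp only [Function.comp_def, hexp, Real.rpow_natCast] at h
  exact h.congr_deriv (by simp)

theorem _root_.HasDerivAt.norm {f : ℝ → E} {f' : E} {x : ℝ} (hf : HasDerivAt f f' x)
    (h₀ : f x ≠ 0) : HasDerivAt (fun y ↦ ‖f y‖) (⟪f x, f'⟫_ℝ / ‖f x‖) x := by
  have h := hf.norm_sq.sqrt (by positivity)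
  simp only [Real.sqrt_sq (norm_nonneg _)] at h
  exact h.congr_deriv (by ring)

theorem hasDerivAt_potential_norm {u : ℝ → E} {x : ℝ} {u' : E} (hu : HasDerivAt u u' x) :
    HasDerivAt (fun y ↦ potential a₁ a₂ a₃ ‖u y‖)
      (nonlinearity a₁ a₂ a₃ ‖u x‖ * ⟪u x, u'⟫_ℝ) x := by
  have h := (((hu.norm_pow_add_two 1).const_mul (a₁ / 3)).add
    ((hu.norm_pow_add_two 2).const_mul (a₂ / 4))).add ((hu.norm_pow_add_two 3).const_mul (a₃ / 5))
  refine h.congr_deriv ?_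
  unfold nonlinearity
  push_cast
  ring

variable {a₁ a₂ a₃} {u : ℝ → E}

theorem hasDerivAt_energy (hu : Differentiable ℝ u)
    (hu'' : ∀ x, HasDerivAt (deriv u) (-nonlinearity a₁ a₂ a₃ ‖u x‖ • u x) x) (x : ℝ) :
    HasDerivAt (energy a₁ a₂ a₃ u) 0 x := by
  have h := ((hu'' x).norm_sq.div_const 2).add
    (hasDerivAt_potential_norm a₁ a₂ a₃ (hu x).hasDerivAt)
  refine h.congr_deriv ?_
  rw [inner_smul_right, real_inner_comm]
  ring

theorem tendsto_deriv_atTop (hu : Differentiable ℝ u)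
    (hu'' : ∀ x, HasDerivAt (deriv u) (-nonlinearity a₁ a₂ a₃ ‖u x‖ • u x) x)
    (htop : Tendsto u atTop (𝓝 0)) : Tendsto (deriv u) atTop (𝓝 0) := by
  refine tendsto_deriv_atTop_of_tendsto_deriv_deriv hu (fun x ↦ (hu'' x).differentiableAt) htop ?_
  have hcont : Continuous fun r : ℝ ↦ nonlinearity a₁ a₂ a₃ r := by
    unfold nonlinearity; fun_prop
  have := ((hcont.tendsto 0).comp (tendsto_zero_iff_norm_tendsto_zero.mp htop)).neg.smul htop
  simpa [funext fun x ↦ (hu'' x).deriv] using this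

theorem energy_eq_zero (hu : Differentiable ℝ u)
    (hu'' : ∀ x, HasDerivAt (deriv u) (-nonlinearity a₁ a₂ a₃ ‖u x‖ • u x) x)
    (htop : Tendsto u atTop (𝓝 0)) (x : ℝ) : energy a₁ a₂ a₃ u x = 0 := by
  refine eq_of_hasDerivAt_zero_of_tendsto (hasDerivAt_energy hu hu'') ?_ x
  have hcont : Continuous fun r : ℝ ↦ potential a₁ a₂ a₃ r := by
    unfold potential; fun_prop
  have hu' := tendsto_zero_iff_norm_tendsto_zero.mp (tendsto_deriv_atTop hu hu'' htop)
  have := ((hu'.pow 2).div_const 2).add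
    ((hcont.tendsto 0).comp (tendsto_zero_iff_norm_tendsto_zero.mp htop))
  unfold energy
  simpa [potential] using this

theorem exists_norm_deriv_le_mul_norm (hu : Differentiable ℝ u)
    (hu'' : ∀ x, HasDerivAt (deriv u) (-nonlinearity a₁ a₂ a₃ ‖u x‖ • u x) x)
    (htop : Tendsto u atTop (𝓝 0)) (hbot : Tendsto u atBot (𝓝 0)) :
    ∃ K, ∀ x, ‖deriv u x‖ ≤ K * ‖u x‖ := by
  obtain ⟨B, hB⟩ := isBounded_iff_forall_norm_le.mp
    (hu.continuous.isBounded_range_iff_isBigO_atTop_atBot.mpr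
      ⟨htop.isBigO_one ℝ, hbot.isBigO_one ℝ⟩)
  set C := |a₁| / 3 * B + |a₂| / 4 * B ^ 2 + |a₃| / 5 * B ^ 3 with hC
  refine ⟨√(2 * C), fun x ↦ ?_⟩
  set r := ‖u x‖
  have hr₀ : 0 ≤ r := norm_nonneg _
  have hrB : r ≤ B := hB _ ⟨x, rfl⟩
  have hq : -(a₁ / 3 * r + a₂ / 4 * r ^ 2 + a₃ / 5 * r ^ 3) ≤ C := by
    have h₂ : r ^ 2 ≤ B ^ 2 := pow_le_pow_left₀ hr₀ hrB 2
    have h₃ : r ^ 3 ≤ B ^ 3 := pow_le_pow_left₀ hr₀ hrB 3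
    have hc : ∀ a : ℝ, 0 ≤ |a| + a := fun a ↦ by linarith [neg_abs_le a]
    linarith [hC, mul_nonneg (hc a₁) hr₀, mul_nonneg (hc a₂) (pow_nonneg hr₀ 2),
      mul_nonneg (hc a₃) (pow_nonneg hr₀ 3), mul_le_mul_of_nonneg_left hrB (abs_nonneg a₁),
      mul_le_mul_of_nonneg_left h₂ (abs_nonneg a₂), mul_le_mul_of_nonneg_left h₃ (abs_nonneg a₃)]
  have hsq : ‖deriv u x‖ ^ 2 ≤ 2 * C * r ^ 2 := by
    have := energy_eq_zero hu hu'' htop x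
    unfold energy potential at this
    nlinarith [pow_nonneg hr₀ 2]
  calc ‖deriv u x‖ ≤ √(2 * C * r ^ 2) := Real.le_sqrt_of_sq_le hsq
    _ = √(2 * C) * r := by rw [Real.sqrt_mul' _ (sq_nonneg r), Real.sqrt_sq hr₀]

theorem ne_zero_of_tendsto (hu : Differentiable ℝ u)
    (hu'' : ∀ x, HasDerivAt (deriv u) (-nonlinearity a₁ a₂ a₃ ‖u x‖ • u x) x)
    (htop : Tendsto u atTop (𝓝 0)) (hbot : Tendsto u atBot (𝓝 0)) (hne : ∃ x, u x ≠ 0)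
    (x : ℝ) : u x ≠ 0 := by
  obtain ⟨K, hK⟩ := exists_norm_deriv_le_mul_norm hu hu'' htop hbot
  obtain ⟨y, hy⟩ := hne
  exact fun hx ↦ hy (eq_zero_of_norm_deriv_le_mul_norm hu hK hx y)

end InnerProductSpace

section Complex

open ComplexConjugate

theorem hasDerivAt_im_conj_mul_deriv {u : ℝ → ℂ} (hu : Differentiable ℝ u) {r x : ℝ}
    (h : HasDerivAt (deriv u) (r • u x) x) :
    HasDerivAt (fun y ↦ (conj (u y) * deriv u y).im) 0 x := by
  have h' := Complex.imCLM.hasFDerivAt.comp_hasDerivAt x ((hu x).hasDerivAt.star.mul h)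
  refine h'.congr_deriv ?_
  rw [Complex.imCLM_apply, RCLike.star_def, Complex.real_smul, mul_left_comm, Complex.conj_mul',
    Complex.conj_mul']
  norm_cast

theorem im_conj_mul_deriv_eq_zero {u : ℝ → ℂ} (hu : Differentiable ℝ u)
    (hu'' : ∀ x, HasDerivAt (deriv u) (-nonlinearity a₁ a₂ a₃ ‖u x‖ • u x) x)
    (htop : Tendsto u atTop (𝓝 0)) (x : ℝ) : (conj (u x) * deriv u x).im = 0 := by
  refine eq_of_hasDerivAt_zero_of_tendsto (fun y ↦ hasDerivAt_im_conj_mul_deriv hu (hu'' y)) ?_ x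
  have := (Complex.continuous_im.tendsto _).comp
    (((Complex.continuous_conj.tendsto 0).comp htop).mul (tendsto_deriv_atTop hu hu'' htop))
  simpa [Function.comp_def] using this

theorem exists_eq_mul_norm {u : ℝ → ℂ} (hu : Differentiable ℝ u) (h₀ : ∀ x, u x ≠ 0)
    (hL : ∀ x, (conj (u x) * deriv u x).im = 0) : ∃ c : ℂ, ‖c‖ = 1 ∧ ∀ x, u x = c * ‖u x‖ := by
  have hphase : ∀ x, HasDerivAt (fun y ↦ u y / ‖u y‖) 0 x := by
    intro x
    have hn : (‖u x‖ : ℂ) ≠ 0 := by simpa using h₀ x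
    have hreal : ((deriv u x * conj (u x)).re : ℂ) = deriv u x * conj (u x) :=
      Complex.ext rfl (by simpa [mul_comm] using (hL x).symm)
    refine ((hu x).hasDerivAt.div ((hu x).hasDerivAt.norm (h₀ x)).ofReal_comp hn).congr_deriv ?_
    -- `‖u‖² u' = u (u' conj u) = u ⟪u, u'⟫` because `u' conj u` is real
    rw [Complex.inner, Complex.ofReal_div, hreal, div_eq_zero_iff, sub_eq_zero,
      mul_div_assoc', eq_div_iff hn, mul_assoc, ← sq, ← Complex.conj_mul']
    left
    ring
  refine ⟨u 0 / ‖u 0‖, by simp [h₀ 0], fun x ↦ ?_⟩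
  have hconst : u x / ‖u x‖ = u 0 / ‖u 0‖ := is_const_of_deriv_eq_zero
    (fun y ↦ (hphase y).differentiableAt) (fun y ↦ (hphase y).deriv) x 0
  rw [← hconst]
  field_simp [h₀ x]

theorem deriv_deriv_norm_of_eq_mul_norm {u : ℝ → ℂ} (hu : Differentiable ℝ u)
    (hu'' : ∀ x, HasDerivAt (deriv u) (-nonlinearity a₁ a₂ a₃ ‖u x‖ • u x) x) {c : ℂ}
    (hc : ‖c‖ = 1) (huc : ∀ x, u x = c * ‖u x‖) (x : ℝ) :
    deriv (deriv fun y ↦ ‖u y‖) x = -nonlinearity a₁ a₂ a₃ ‖u x‖ * ‖u x‖ := by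
  have hρ : ∀ y, ‖u y‖ = (conj c * u y).re := fun y ↦ by
    nth_rewrite 2 [huc y]
    rw [← mul_assoc, Complex.conj_mul', hc]
    simp
  have hre : ∀ {f : ℝ → ℂ} {f' : ℂ} {y : ℝ}, HasDerivAt f f' y →
      HasDerivAt (fun z ↦ (conj c * f z).re) (conj c * f').re y := fun hf ↦
    Complex.reCLM.hasFDerivAt.comp_hasDerivAt _ (hf.const_mul _)
  have hderiv : deriv (fun y ↦ ‖u y‖) = fun y ↦ (conj c * deriv u y).re := by
    simp_rw [hρ]
    exact funext fun y ↦ (hre (hu y).hasDerivAt).deriv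
  rw [hderiv, (hre (hu'' x)).deriv, hρ x, mul_smul_comm, Complex.smul_re, smul_eq_mul]

end Complex

end TriplePower

open TriplePower in
theorem stmt7 (a₁ a₂ a₃ : ℝ) (u : ℝ → ℂ) (hu : ContDiff ℝ 2 u)
    (heq : ∀ x : ℝ, deriv (deriv u) x
      + ((a₁ * ‖u x‖ : ℝ) : ℂ) * u x
      + ((a₂ * ‖u x‖^2 : ℝ) : ℂ) * u x
      + ((a₃ * ‖u x‖^3 : ℝ) : ℂ) * u x = 0)
    (htop : Tendsto u atTop (nhds 0)) (hbot : Tendsto u atBot (nhds 0))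
    (hne : ∃ x : ℝ, u x ≠ 0) :
    ∃ θ₀ : ℝ, ∃ ρ : ℝ → ℝ,
      (∀ x : ℝ, 0 < ρ x) ∧
      (∀ x : ℝ, deriv (deriv ρ) x + a₁ * |ρ x| * ρ x + a₂ * |ρ x|^2 * ρ x
        + a₃ * |ρ x|^3 * ρ x = 0) ∧
      Tendsto ρ atTop (nhds 0) ∧ Tendsto ρ atBot (nhds 0) ∧
      ∀ x : ℝ, u x = Complex.exp (θ₀ * Complex.I) * (ρ x : ℂ) := by
  have hu₁ : Differentiable ℝ u := hu.differentiable (by norm_num)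
  have hu'' : ∀ x, HasDerivAt (deriv u) (-nonlinearity a₁ a₂ a₃ ‖u x‖ • u x) x := fun x ↦ by
    refine (hu.differentiable_deriv_two x).hasDerivAt.congr_deriv ?_
    have h := heq x
    rw [Complex.real_smul, nonlinearity]
    push_cast at h ⊢
    linear_combination h
  have h₀ := ne_zero_of_tendsto hu₁ hu'' htop hbot hne
  obtain ⟨c, hc, huc⟩ := exists_eq_mul_norm hu₁ h₀ (im_conj_mul_deriv_eq_zero hu₁ hu'' htop)
  refine ⟨c.arg, fun x ↦ ‖u x‖, fun x ↦ norm_pos_iff.mpr (h₀ x), fun x ↦ ?_,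
    tendsto_zero_iff_norm_tendsto_zero.mp htop, tendsto_zero_iff_norm_tendsto_zero.mp hbot,
    fun x ↦ ?_⟩
  · rw [deriv_deriv_norm_of_eq_mul_norm hu₁ hu'' hc huc, abs_norm, nonlinearity]
    ring
  · conv_lhs => rw [huc x]
    simpa [hc] using congrArg (· * (‖u x‖ : ℂ)) (Complex.norm_mul_exp_arg_mul_I c).symm
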